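/- Let w[i..j] and w[i'..j'] be fragments of a word w, both having abelian period P. If w[i..j] is properly contained in w[i'..j'], then w[i..j] is not an abelian run with period P. (Maximality of abelian runs with respect to containment among all fragments with the same period, not just those sharing an anchor.) -/

import Mathlib

open scoped BigOperators

variable {α : Type*} [DecidableEq α] [Fintype α]

/-- Parikh vector of a word: counts of each letter. -/
def parikh (w : List α) (a : α) : ℕ := w.count a

/-- Componentwise containment of Parikh vectors. -/
def PSub (P Q : α → ℕ) : Prop := ∀ a, P a ≤ Q a

/-- Strict containment of Parikh vectors. -/
def PSSub (P Q : α → ℕ) : Prop := PSub P Q ∧ P ≠ Q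

/-- Norm of a Parikh vector: sum of its components. -/
def pnorm (P : α → ℕ) : ℕ := ∑ a, P a

/-- Fragment w[i..j] (both endpoints included). -/
def frag (w : List α) (i j : ℕ) : List α := (w.drop i).take (j + 1 - i)

/-- `IsPF P w k u` : w = u 0 ++ u 1 ++ ⋯ ++ u k is a periodic factorization of w
with respect to P: the cores u 1, …, u (k-1) have Parikh vector P and the head u 0
and tail u k have Parikh vector strictly contained in P. -/
def IsPF (P : α → ℕ) (w : List α) (k : ℕ) (u : ℕ → List α) : Prop :=
  1 ≤ k ∧ w = ((List.range (k + 1)).map u).flatten ∧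
  (∀ i, 0 < i → i < k → parikh (u i) = P) ∧
  PSSub (parikh (u 0)) P ∧ PSSub (parikh (u k)) P

/-- Fragment w[i..j] has abelian period P. -/
def HasPeriod (P : α → ℕ) (w : List α) (i j : ℕ) : Prop :=
  ∃ m u, IsPF P (frag w i j) m u

/-- Fragment w[i..j] has abelian period P anchored at k : there is a periodic
factorization whose cores start (within w) at positions ≡ k (mod |P|). -/
def HasAnchPeriod (P : α → ℕ) (w : List α) (i j k : ℕ) : Prop :=
  ∃ m u, IsPF P (frag w i j) m u ∧ (i + (u 0).length) % pnorm P = k % pnorm P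

/-- Fragment w[i..j] is periodic with period P anchored at k
(factorization with at least two cores). -/
def PeriodicAnch (P : α → ℕ) (w : List α) (i j k : ℕ) : Prop :=
  ∃ m u, 3 ≤ m ∧ IsPF P (frag w i j) m u ∧
    (i + (u 0).length) % pnorm P = k % pnorm P

/-- Fragment w[i..j] is periodic with period P (at least two cores, any anchor). -/
def APeriodic (P : α → ℕ) (w : List α) (i j : ℕ) : Prop :=
  ∃ m u, 3 ≤ m ∧ IsPF P (frag w i j) m u

/-- k-anchored abelian run with period P. -/
def AnchoredRun (P : α → ℕ) (w : List α) (i j k : ℕ) : Prop :=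
  i ≤ j ∧ j < w.length ∧ PeriodicAnch P w i j k ∧
  (i = 0 ∨ ¬ PeriodicAnch P w (i - 1) j k) ∧
  (j + 1 = w.length ∨ ¬ PeriodicAnch P w i (j + 1) k)

/-- Abelian run with period P. -/
def AbelianRun (P : α → ℕ) (w : List α) (i j : ℕ) : Prop :=
  i ≤ j ∧ j < w.length ∧ APeriodic P w i j ∧
  (i = 0 ∨ ¬ APeriodic P w (i - 1) j) ∧
  (j + 1 = w.length ∨ ¬ APeriodic P w i (j + 1))

/-- B_i[k]: the starting position of the longest suffix of w[0..i] having abelian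
period P anchored at k (⊤ = ∞ if no such suffix exists). -/
noncomputable def Bfun (P : α → ℕ) (w : List α) (i k : ℕ) : ℕ∞ :=
  sInf {b : ℕ∞ | ∃ s : ℕ, b = (s : ℕ∞) ∧ s ≤ i + 1 ∧ HasAnchPeriod P w s i k}

/-! Every factor of a word with abelian period `P` has abelian period `P`; in particular so does
the inner fragment extended by one letter inside the outer one. Such an extension `a :: y` of a
word `y = h ++ c₁ ++ ⋯ ++ cₖ ++ t` with `k ≥ 2` again has two cores: if `a :: h` fits in `P` it is a
new head or a new core, and otherwise the head of any factorization of `a :: y` is shorter than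
`a :: h`, which leaves more than `|P|` letters, hence two cores, for the core part. So the inner
fragment is not maximal. -/

omit [Fintype α] in
theorem PSSub.of_sublist {P : α → ℕ} {s t : List α} (hst : s.Sublist t)
    (ht : PSSub (parikh t) P) : PSSub (parikh s) P := by
  refine ⟨fun a => (hst.count_le a).trans (ht.1 a), fun hs => ht.2 ?_⟩
  funext a
  exact le_antisymm (ht.1 a) (hs ▸ hst.count_le a)

omit [Fintype α] in
theorem pssub_parikh_of_sublist_of_length_lt {P : α → ℕ} {s t : List α} (hst : s.Sublist t)
    (hlt : s.length < t.length) (ht : parikh t = P) : PSSub (parikh s) P := by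
  refine ⟨fun a => ht ▸ hst.count_le a, fun hs => hlt.ne ?_⟩
  exact (List.perm_iff_count.2 fun a => congrFun (hs.trans ht.symm) a).length_eq

omit [Fintype α] in
theorem parikh_reverse (s : List α) : parikh s.reverse = parikh s :=
  funext fun _ => List.count_reverse

theorem pnorm_parikh (s : List α) : pnorm (parikh s) = s.length := by
  simpa [pnorm, parikh] using
    Multiset.sum_count_eq_card (s := Finset.univ) (m := (s : Multiset α)) (by simp)

theorem length_eq_pnorm_of_parikh_eq {P : α → ℕ} {s : List α} (h : parikh s = P) :
    s.length = pnorm P := by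
  rw [← pnorm_parikh, h]

theorem PSSub.length_lt {P : α → ℕ} {s : List α} (h : PSSub (parikh s) P) :
    s.length < pnorm P := by
  rw [← pnorm_parikh]
  exact Finset.sum_lt_sum (fun a _ => h.1 a)
    (let ⟨a, ha⟩ := Function.ne_iff.1 h.2; ⟨a, Finset.mem_univ a, (h.1 a).lt_of_ne ha⟩)

theorem length_flatten_of_parikh_eq {P : α → ℕ} {cs : List (List α)}
    (hcs : ∀ c ∈ cs, parikh c = P) : cs.flatten.length = cs.length * pnorm P := by
  rw [List.length_flatten, List.map_congr_left fun c hc => length_eq_pnorm_of_parikh_eq (hcs c hc),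
    List.map_const', List.sum_replicate, smul_eq_mul]

omit [DecidableEq α] [Fintype α] in
theorem map_getD_range_length (l : List α) (d : α) :
    (List.range l.length).map (fun i => l.getD i d) = l :=
  List.ext_getElem (by simp) fun i _ hi => by simp [List.getElem?_eq_getElem hi]

/-- `IsPF` with at least `n` cores, the cores kept as a list `cs` rather than an indexed family. -/
def HasCoreFactorization (P : α → ℕ) (x : List α) (n : ℕ) : Prop :=
  ∃ (h : List α) (cs : List (List α)) (t : List α), n ≤ cs.length ∧ x = h ++ cs.flatten ++ t ∧
    (∀ c ∈ cs, parikh c = P) ∧ PSSub (parikh h) P ∧ PSSub (parikh t) P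

omit [Fintype α] in
theorem hasCoreFactorization_iff {P : α → ℕ} {x : List α} {n : ℕ} :
    HasCoreFactorization P x n ↔ ∃ m u, n + 1 ≤ m ∧ IsPF P x m u := by
  constructor
  · rintro ⟨h, cs, t, hn, rfl, hcs, hh, ht⟩
    set L := h :: (cs ++ [t])
    refine ⟨cs.length + 1, fun i => L.getD i [], by omega, by omega, ?_, fun i hi0 hik => ?_,
      by simpa [L] using hh, by simpa [L] using ht⟩
    · rw [show cs.length + 1 + 1 = L.length by simp [L], map_getD_range_length]
      simp [L]
    · obtain ⟨i, rfl⟩ : ∃ k, i = k + 1 := ⟨i - 1, by omega⟩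
      have hi : i < cs.length := by omega
      simpa [L, List.getElem?_append_left hi, List.getElem?_eq_getElem hi] using
        hcs _ (List.getElem_mem hi)
  · rintro ⟨m, u, hm, -, hx, hcores, hh, ht⟩
    obtain ⟨k, rfl⟩ : ∃ k, m = k + 1 := ⟨m - 1, by omega⟩
    refine ⟨u 0, (List.range k).map (fun i => u (i + 1)), u (k + 1), by simp; omega, ?_, ?_,
      hh, ht⟩
    · rw [hx, List.range_succ, List.range_succ_eq_map]
      simp [Function.comp_def]
    · simp only [List.mem_map, List.mem_range, forall_exists_index, and_imp]
      rintro _ i hi rfl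
      exact hcores (i + 1) (by omega) (by omega)

omit [Fintype α] in
theorem exists_take_flatten_append {P : α → ℕ} {cs : List (List α)} {t : List α}
    (hcs : ∀ c ∈ cs, parikh c = P) (ht : PSSub (parikh t) P) (n : ℕ) :
    ∃ (ds : List (List α)) (t' : List α), (cs.flatten ++ t).take n = ds.flatten ++ t' ∧
      (∀ d ∈ ds, parikh d = P) ∧ PSSub (parikh t') P := by
  induction cs generalizing n with
  | nil => exact ⟨[], t.take n, by simp, by simp, ht.of_sublist (List.take_sublist n t)⟩
  | cons c cs ih =>
    have hc : parikh c = P := hcs c List.mem_cons_self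
    by_cases hn : n < c.length
    · refine ⟨[], c.take n, ?_, by simp,
        pssub_parikh_of_sublist_of_length_lt (List.take_sublist n c) (by simpa using hn) hc⟩
      rw [List.flatten_cons, List.append_assoc, List.take_append_of_le_length hn.le]
      simp
    · obtain ⟨m, rfl⟩ : ∃ m, n = c.length + m := ⟨n - c.length, by omega⟩
      obtain ⟨ds, t', heq, hds, ht'⟩ := ih (fun d hd => hcs d (List.mem_cons_of_mem c hd)) m
      refine ⟨c :: ds, t', ?_, by simpa [hc] using hds, ht'⟩
      rw [List.flatten_cons, List.append_assoc, List.take_length_add_append, heq]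
      simp

omit [Fintype α] in
theorem HasCoreFactorization.of_prefix {P : α → ℕ} {x s : List α}
    (hx : HasCoreFactorization P x 0) (hs : s <+: x) : HasCoreFactorization P s 0 := by
  obtain ⟨h, cs, t, -, rfl, hcs, hh, ht⟩ := hx
  rw [List.prefix_iff_eq_take.1 hs]
  by_cases hn : s.length ≤ h.length
  · refine ⟨h.take s.length, [], [], le_rfl, ?_, by simp,
      hh.of_sublist (List.take_sublist _ h), hh.of_sublist (List.nil_sublist h)⟩
    rw [List.append_assoc, List.take_append_of_le_length hn]
    simp
  · obtain ⟨m, hm⟩ : ∃ m, s.length = h.length + m := ⟨s.length - h.length, by omega⟩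
    obtain ⟨ds, t', heq, hds, ht'⟩ := exists_take_flatten_append hcs ht m
    refine ⟨h, ds, t', Nat.zero_le _, ?_, hds, hh, ht'⟩
    rw [hm, List.append_assoc, List.take_length_add_append, heq, List.append_assoc]

omit [Fintype α] in
theorem HasCoreFactorization.reverse {P : α → ℕ} {x : List α} {n : ℕ}
    (hx : HasCoreFactorization P x n) : HasCoreFactorization P x.reverse n := by
  obtain ⟨h, cs, t, hn, rfl, hcs, hh, ht⟩ := hx
  refine ⟨t.reverse, (cs.map List.reverse).reverse, h.reverse, by simpa using hn,
    by simp [List.reverse_flatten], ?_, by rwa [parikh_reverse], by rwa [parikh_reverse]⟩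
  simp only [List.mem_reverse, List.mem_map]
  rintro _ ⟨c, hc, rfl⟩
  rw [parikh_reverse, hcs c hc]

omit [Fintype α] in
theorem HasCoreFactorization.of_suffix {P : α → ℕ} {x s : List α}
    (hx : HasCoreFactorization P x 0) (hs : s <:+ x) : HasCoreFactorization P s 0 := by
  simpa using (hx.reverse.of_prefix (List.reverse_prefix.2 hs)).reverse

omit [Fintype α] in
theorem HasCoreFactorization.of_infix {P : α → ℕ} {x s : List α}
    (hx : HasCoreFactorization P x 0) (hs : s <:+: x) : HasCoreFactorization P s 0 := by
  obtain ⟨l, r, rfl⟩ := hs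
  exact (hx.of_suffix ⟨l, (List.append_assoc _ _ _).symm⟩).of_prefix ⟨r, rfl⟩

/-- The head of a factorization of `x` cannot contain the overflowing prefix `s`, so the cores
cover more than `|x| - |s| - |P| ≥ |P|` letters. -/
theorem HasCoreFactorization.two_le_of_prefix_not_psub {P : α → ℕ} {x s : List α}
    (hx : HasCoreFactorization P x 0) (hs : s <+: x) (hover : ¬ PSub (parikh s) P)
    (hlen : s.length + 2 * pnorm P ≤ x.length) : HasCoreFactorization P x 2 := by
  obtain ⟨h, cs, t, -, hxeq, hcs, hh, ht⟩ := hx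
  have hhs : h.length < s.length := by
    by_contra! hle
    have hsh : s <+: h :=
      List.prefix_of_prefix_length_le hs ⟨cs.flatten ++ t, by rw [hxeq, List.append_assoc]⟩ hle
    exact hover fun a => (hsh.sublist.count_le a).trans (hh.1 a)
  have hcs_len : 2 ≤ cs.length := by
    have hx_len := congrArg List.length hxeq
    simp only [List.length_append, length_flatten_of_parikh_eq hcs] at hx_len
    have ht_len := ht.length_lt
    by_contra! hlt
    have : cs.length * pnorm P ≤ 1 * pnorm P := Nat.mul_le_mul_right _ (by omega)
    omega
  exact ⟨h, cs, t, hcs_len, hxeq, hcs, hh, ht⟩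

theorem HasCoreFactorization.cons {P : α → ℕ} {a : α} {y : List α}
    (hy : HasCoreFactorization P y 2) (hay : HasCoreFactorization P (a :: y) 0) :
    HasCoreFactorization P (a :: y) 2 := by
  obtain ⟨h, cs, t, hn, rfl, hcs, hh, ht⟩ := hy
  by_cases hle : PSub (parikh (a :: h)) P
  · by_cases heq : parikh (a :: h) = P
    · exact ⟨[], (a :: h) :: cs, t, by simp; omega, by simp, List.forall_mem_cons.2 ⟨heq, hcs⟩,
        hh.of_sublist (List.nil_sublist h), ht⟩
    · exact ⟨a :: h, cs, t, hn, by simp, hcs, ⟨hle, heq⟩, ht⟩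
  · refine hay.two_le_of_prefix_not_psub ⟨cs.flatten ++ t, by simp⟩ hle ?_
    simp only [List.length_cons, List.length_append, length_flatten_of_parikh_eq hcs]
    nlinarith

theorem HasCoreFactorization.concat {P : α → ℕ} {a : α} {y : List α}
    (hy : HasCoreFactorization P y 2) (hya : HasCoreFactorization P (y ++ [a]) 0) :
    HasCoreFactorization P (y ++ [a]) 2 := by
  simpa using (hy.reverse.cons (a := a) (by simpa using hya.reverse)).reverse

omit [DecidableEq α] [Fintype α] in
theorem frag_infix_frag (w : List α) {i j i' j' : ℕ} (hi : i' ≤ i) (hj : j ≤ j') :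
    frag w i j <:+: frag w i' j' := by
  have hdrop : (frag w i' j').drop (i - i') = (w.drop i).take (j' + 1 - i) := by
    rw [frag, List.drop_take, List.drop_drop, Nat.add_sub_cancel' hi]
    congr 1
    omega
  exact (List.take_prefix_take_left (by omega)).isInfix.trans
    (hdrop ▸ List.drop_suffix _ _).isInfix

omit [DecidableEq α] [Fintype α] in
theorem frag_eq_cons (w : List α) {i j : ℕ} (hij : i ≤ j) (hi : i < w.length) :
    frag w i j = w[i] :: frag w (i + 1) j := by
  rw [frag, frag, List.drop_eq_getElem_cons hi, show j + 1 - i = j + 1 - (i + 1) + 1 by omega,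
    List.take_succ_cons]

omit [DecidableEq α] [Fintype α] in
theorem frag_succ_eq_append (w : List α) {i j : ℕ} (hij : i ≤ j + 1) (hj : j + 1 < w.length) :
    frag w i (j + 1) = frag w i j ++ [w[j + 1]] := by
  rw [frag, frag, show j + 1 + 1 - i = j + 1 - i + 1 by omega, List.take_add_one,
    List.getElem?_drop, show i + (j + 1 - i) = j + 1 by omega, List.getElem?_eq_getElem hj]
  rfl

omit [Fintype α] in
theorem hasPeriod_iff {P : α → ℕ} {w : List α} {i j : ℕ} :
    HasPeriod P w i j ↔ HasCoreFactorization P (frag w i j) 0 := by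
  rw [hasCoreFactorization_iff]
  exact ⟨fun ⟨m, u, h⟩ => ⟨m, u, h.1, h⟩, fun ⟨m, u, _, h⟩ => ⟨m, u, h⟩⟩

omit [Fintype α] in
theorem aPeriodic_iff {P : α → ℕ} {w : List α} {i j : ℕ} :
    APeriodic P w i j ↔ HasCoreFactorization P (frag w i j) 2 := by
  rw [hasCoreFactorization_iff]
  rfl

theorem APeriodic.extend_left {P : α → ℕ} {w : List α} {i j i' j' : ℕ}
    (h : APeriodic P w (i + 1) j) (hw : HasPeriod P w i' j') (hi : i' ≤ i) (hj : j ≤ j')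
    (hij : i ≤ j) (hjw : j < w.length) : APeriodic P w i j := by
  have hx := (hasPeriod_iff.1 hw).of_infix (frag_infix_frag w hi hj)
  rw [aPeriodic_iff] at h ⊢
  rw [frag_eq_cons w hij (by omega)] at hx ⊢
  exact h.cons hx

theorem APeriodic.extend_right {P : α → ℕ} {w : List α} {i j i' j' : ℕ}
    (h : APeriodic P w i j) (hw : HasPeriod P w i' j') (hi : i' ≤ i) (hj : j + 1 ≤ j')
    (hij : i ≤ j + 1) (hjw : j + 1 < w.length) : APeriodic P w i (j + 1) := by
  have hx := (hasPeriod_iff.1 hw).of_infix (frag_infix_frag w hi hj)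
  rw [aPeriodic_iff] at h ⊢
  rw [frag_succ_eq_append w hij hjw] at hx ⊢
  exact h.concat hx

theorem not_abelianRun_of_properly_contained_general (P : α → ℕ) (w : List α)
    (i j i' j' : ℕ) (hj' : j' < w.length)
    (h2 : HasPeriod P w i' j')
    (hc : (i' < i ∧ j ≤ j') ∨ (i' ≤ i ∧ j < j')) :
    ¬ AbelianRun P w i j := by
  rintro ⟨hij, hjw, hper, hleft, hright⟩
  rcases hc with ⟨hi', hj⟩ | ⟨hi', hj⟩
  · obtain ⟨k, rfl⟩ : ∃ k, i = k + 1 := ⟨i - 1, by omega⟩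
    exact hleft.resolve_left (by omega) (hper.extend_left h2 (by omega) hj (by omega) hjw)
  · exact hright.resolve_left (by omega) (hper.extend_right h2 hi' hj (by omega) (by omega))

/-- If two fragments have abelian period P and one is properly contained in the
other, the inner one is not an abelian run with period P. -/
theorem not_abelianRun_of_properly_contained (P : α → ℕ) (w : List α)
    (i j i' j' : ℕ) (hij : i ≤ j) (hij' : i' ≤ j') (hj' : j' < w.length)
    (h1 : HasPeriod P w i j) (h2 : HasPeriod P w i' j')
    (hc : (i' < i ∧ j ≤ j') ∨ (i' ≤ i ∧ j < j')) :
    ¬ AbelianRun P w i j :=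
  not_abelianRun_of_properly_contained_general P w i j i' j' hj' h2 hc
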